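/- Suppose w ∈ C^2(Σ) ∩ C^0(closure Σ) satisfies −Δw = c(x) w on the strip Σ = R^{n−1} × (0, δ) with ‖c‖_∞ ≤ C_0, w ≤ 0 on ∂Σ, w bounded, and δ² C_0 < π²/4 (narrowness). Then w ≤ 0 in Σ. -/

import Mathlib

/-!
Divide by a positive barrier. On the strip `0 < xₙ < δ` take
`g x = cos (α (xₙ - δ/2)) · ∏_{m < n} cosh (β xₘ)` with `α = π / (2δ)`: it is a product of
one-variable eigenfunctions, so `-Δ g = (α² - n β²) g`, and `δ² C₀ < π²/4` leaves room to choose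
`β > 0` with `α² - n β² > C₀`. As `g` grows along the strip while `w` is bounded, a positive value
of `w` would make `w / g` attain a positive maximum `S` at some point `z`, which cannot lie on the
boundary. Then `w - S g` has a local maximum at `z`, so `Δ w (z) ≤ S Δ g (z) < -C₀ w (z)`,
contradicting `-Δ w = c w ≤ C₀ w` at `z`.
-/

open Real Filter Set

noncomputable def lap {m : ℕ} (u : EuclideanSpace ℝ (Fin m) → ℝ)
    (x : EuclideanSpace ℝ (Fin m)) : ℝ :=
  ∑ i, fderiv ℝ (fun y => fderiv ℝ u y (EuclideanSpace.single i 1)) x (EuclideanSpace.single i 1)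

open Topology Laplacian InnerProductSpace

theorem IsLocalMax.deriv_deriv_nonpos {f : ℝ → ℝ} {a : ℝ} (h : IsLocalMax f a)
    (hc : ContinuousAt f a) : deriv (deriv f) a ≤ 0 := by
  by_contra! hpos
  -- by the second-derivative test `a` is also a local minimum, so `f` is locally constant
  have hconst : f =ᶠ[𝓝 a] fun _ => f a :=
    (h.and (isLocalMin_of_deriv_deriv_pos hpos h.deriv_eq_zero hc)).mono
      fun x hx => le_antisymm hx.1 hx.2
  have hderiv : deriv f =ᶠ[𝓝 a] fun _ => 0 := by
    filter_upwards [hconst.eventuallyEq_nhds] with x hx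
    rw [hx.deriv_eq, deriv_const]
  rw [hderiv.deriv_eq, deriv_const] at hpos
  exact lt_irrefl 0 hpos

theorem Real.deriv_deriv_cos_mul_sub (α b s : ℝ) :
    deriv (deriv fun t => cos (α * (t - b))) s = -α ^ 2 * cos (α * (s - b)) := by
  have hlin : ∀ t, HasDerivAt (fun t => α * (t - b)) α t := fun t => by
    simpa using ((hasDerivAt_id t).sub_const b).const_mul α
  have h₁ : ∀ t, HasDerivAt (fun t => cos (α * (t - b))) (-sin (α * (t - b)) * α) t :=
    fun t => (hlin t).cos
  have h₂ : HasDerivAt (fun t => -sin (α * (t - b)) * α) (-(cos (α * (s - b)) * α) * α) s :=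
    ((hlin s).sin.neg).mul_const α
  rw [funext fun t => (h₁ t).deriv, h₂.deriv]
  ring

theorem Real.deriv_deriv_cosh_mul (β s : ℝ) :
    deriv (deriv fun t => cosh (β * t)) s = β ^ 2 * cosh (β * s) := by
  have h₁ : ∀ t, HasDerivAt (fun t => cosh (β * t)) (sinh (β * t) * β) t := fun t => by
    simpa using ((hasDerivAt_id t).const_mul β).cosh
  have h₂ : HasDerivAt (fun t => sinh (β * t) * β) (cosh (β * s) * β * β) s := by
    simpa using (((hasDerivAt_id s).const_mul β).sinh).mul_const β
  rw [funext fun t => (h₁ t).deriv, h₂.deriv]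
  ring

theorem Real.one_add_sq_div_four_le_cosh (y : ℝ) : 1 + y ^ 2 / 4 ≤ cosh y := by
  rw [← cosh_abs, cosh_eq, ← sq_abs]
  have h₁ := quadratic_le_exp_of_nonneg (abs_nonneg y)
  have h₂ := add_one_le_exp (-|y|)
  nlinarith [sq_nonneg |y|]

theorem Real.cos_mul_half_le_cos_mul_sub {α δ t : ℝ} (hα : 0 ≤ α) (hαδ : α * δ ≤ 2 * π)
    (ht : t ∈ Icc 0 δ) : cos (α * δ / 2) ≤ cos (α * (t - δ / 2)) := by
  rw [← cos_abs (α * (t - δ / 2))]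
  refine cos_le_cos_of_nonneg_of_le_pi (abs_nonneg _) (by linarith) ?_
  have ht' : |t - δ / 2| ≤ δ / 2 := abs_le.mpr ⟨by linarith [ht.1], by linarith [ht.2]⟩
  calc |α * (t - δ / 2)| = α * |t - δ / 2| := by rw [abs_mul, abs_of_nonneg hα]
    _ ≤ α * (δ / 2) := mul_le_mul_of_nonneg_left ht' hα
    _ = α * δ / 2 := by ring

theorem Real.cos_mul_half_pos {α δ : ℝ} (hα : 0 ≤ α) (hδ : 0 ≤ δ) (hαδ : α * δ < π) :
    0 < cos (α * δ / 2) :=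
  cos_pos_of_mem_Ioo ⟨by linarith [mul_nonneg hα hδ, pi_pos], by linarith⟩

theorem Finset.one_add_sum_le_prod_one_add {ι R : Type*} [CommRing R] [LinearOrder R]
    [IsStrictOrderedRing R] (s : Finset ι) {f : ι → R} (hf : ∀ i ∈ s, 0 ≤ f i) :
    1 + ∑ i ∈ s, f i ≤ ∏ i ∈ s, (1 + f i) := by
  classical
  induction s using Finset.induction_on with
  | empty => simp
  | insert a s ha ih =>
    rw [sum_insert ha, prod_insert ha]
    have hs := ih fun i hi => hf i (mem_insert_of_mem hi)
    have hfa := hf a (mem_insert_self a s)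
    have hsum := sum_nonneg fun i hi => hf i (mem_insert_of_mem hi)
    nlinarith

theorem ContDiffAt.deriv_deriv_comp_line {E : Type*} [NormedAddCommGroup E] [NormedSpace ℝ E]
    {u : E → ℝ} {x : E} (hu : ContDiffAt ℝ 2 u x) (e : E) :
    deriv (deriv fun t : ℝ => u (x + t • e)) 0 = fderiv ℝ (fderiv ℝ u) x e e := by
  have hline : ∀ t : ℝ, HasDerivAt (fun s : ℝ => x + s • e) e t := fun t => by
    simpa using ((hasDerivAt_id t).smul_const e).const_add x
  have hnear : ∀ᶠ t in 𝓝 (0 : ℝ), DifferentiableAt ℝ u (x + t • e) := by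
    have hcont : Tendsto (fun s : ℝ => x + s • e) (𝓝 0) (𝓝 x) := by
      simpa using (hline 0).continuousAt.tendsto
    exact hcont.eventually ((hu.eventually (by simp)).mono fun y hy =>
      hy.differentiableAt (by norm_num))
  have hderiv : deriv (fun t : ℝ => u (x + t • e)) =ᶠ[𝓝 0] fun t => fderiv ℝ u (x + t • e) e :=
    hnear.mono fun t ht => (ht.hasFDerivAt.comp_hasDerivAt t (hline t)).deriv
  have hfd : HasFDerivAt (fderiv ℝ u) (fderiv ℝ (fderiv ℝ u) x) (x + (0 : ℝ) • e) := by
    rw [zero_smul, add_zero]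
    exact ((hu.fderiv_right (m := 1) le_rfl).differentiableAt one_ne_zero).hasFDerivAt
  have hfd_line : HasDerivAt (fun t : ℝ => fderiv ℝ u (x + t • e))
      (fderiv ℝ (fderiv ℝ u) x e) 0 :=
    hfd.comp_hasDerivAt 0 (hline 0)
  rw [hderiv.deriv_eq]
  simpa using (hfd_line.clm_apply (hasDerivAt_const (0 : ℝ) e)).deriv

section Laplacian

variable {E : Type*} [NormedAddCommGroup E] [InnerProductSpace ℝ E] [FiniteDimensional ℝ E]

theorem ContDiffAt.laplacian_eq_sum_deriv_deriv {u : E → ℝ} {x : E} {ι : Type*} [Fintype ι]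
    (hu : ContDiffAt ℝ 2 u x) (v : OrthonormalBasis ι ℝ E) :
    Δ u x = ∑ i, deriv (deriv fun t : ℝ => u (x + t • v i)) 0 := by
  simp [laplacian_eq_iteratedFDeriv_orthonormalBasis u v, iteratedFDeriv_two_apply,
    hu.deriv_deriv_comp_line]

theorem IsLocalMax.laplacian_nonpos {u : E → ℝ} {x : E} (hmax : IsLocalMax u x)
    (hu : ContDiffAt ℝ 2 u x) : Δ u x ≤ 0 := by
  rw [hu.laplacian_eq_sum_deriv_deriv (stdOrthonormalBasis ℝ E)]
  refine Finset.sum_nonpos fun i _ => ?_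
  have hline : Continuous fun t : ℝ => x + t • stdOrthonormalBasis ℝ E i := by fun_prop
  refine IsLocalMax.deriv_deriv_nonpos ?_ ?_
  · exact IsLocalMax.comp_continuous (by simpa using hmax) hline.continuousAt
  · exact ContinuousAt.comp (by simpa using hu.continuousAt) hline.continuousAt

theorem ContinuousOn.exists_isMaxOn_div_of_tendsto_atTop {X : Type*} [TopologicalSpace X]
    {s : Set X} (hs : IsClosed s) {w g : X → ℝ} {M : ℝ} (hw : ContinuousOn w s)
    (hg : ContinuousOn g s) (hg_pos : ∀ x ∈ s, 0 < g x) (hwM : ∀ x ∈ s, w x ≤ M)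
    (hg_top : Tendsto g (cocompact X ⊓ 𝓟 s) atTop) {x₀ : X} (hx₀ : x₀ ∈ s) (hw₀ : 0 < w x₀) :
    ∃ z ∈ s, IsMaxOn (fun x => w x / g x) s z := by
  set v₀ := w x₀ / g x₀
  have hv₀ : 0 < v₀ := div_pos hw₀ (hg_pos x₀ hx₀)
  refine (hw.div hg fun x hx => (hg_pos x hx).ne').exists_isMaxOn' hs hx₀ ?_
  filter_upwards [hg_top.eventually_ge_atTop (M / v₀), mem_inf_of_right (mem_principal_self s)]
    with x hgx hx
  change w x / g x ≤ v₀
  rw [div_le_iff₀ (hg_pos x hx)]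
  calc w x ≤ M := hwM x hx
    _ ≤ v₀ * g x := by rwa [div_le_iff₀ hv₀, mul_comm] at hgx

theorem nonpos_of_neg_laplacian_le_of_barrier {U : Set E} (hU : IsOpen U) {w g : E → ℝ}
    {C M : ℝ} (hw : ContDiffOn ℝ 2 w U) (hw_cont : ContinuousOn w (closure U))
    (hwM : ∀ x ∈ closure U, w x ≤ M) (hw_frontier : ∀ x ∈ frontier U, w x ≤ 0)
    (hw_sub : ∀ x ∈ U, 0 < w x → -Δ w x ≤ C * w x)
    (hg : ContDiffOn ℝ 2 g U) (hg_cont : ContinuousOn g (closure U))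
    (hg_pos : ∀ x ∈ closure U, 0 < g x) (hg_top : Tendsto g (cocompact E ⊓ 𝓟 (closure U)) atTop)
    (hg_super : ∀ x ∈ U, C * g x < -Δ g x) :
    ∀ x ∈ U, w x ≤ 0 := by
  intro x₀ hx₀
  by_contra! hw₀
  obtain ⟨z, hz, hzmax⟩ := hw_cont.exists_isMaxOn_div_of_tendsto_atTop isClosed_closure hg_cont
    hg_pos hwM hg_top (subset_closure hx₀) hw₀
  set S := w z / g z
  have hgz := hg_pos z hz
  have hS : 0 < S := (div_pos hw₀ (hg_pos x₀ (subset_closure hx₀))).trans_le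
    (hzmax (subset_closure hx₀))
  have hwz : w z = S * g z := (div_mul_cancel₀ (w z) hgz.ne').symm
  have hwz_pos : 0 < w z := hwz ▸ mul_pos hS hgz
  have hzU : z ∈ U := by
    by_contra hzU
    linarith [hw_frontier z (hU.frontier_eq ▸ ⟨hz, hzU⟩)]
  have hmax : IsLocalMax (w - S • g) z := by
    filter_upwards [hU.mem_nhds hzU] with x hx
    have hx' : w x / g x ≤ S := hzmax (subset_closure hx)
    rw [div_le_iff₀ (hg_pos x (subset_closure hx))] at hx'
    simp only [Pi.sub_apply, Pi.smul_apply, smul_eq_mul]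
    linarith
  have hwz' := hw.contDiffAt (hU.mem_nhds hzU)
  have hgz' := hg.contDiffAt (hU.mem_nhds hzU)
  have hSgz' : ContDiffAt ℝ 2 (S • g) z := hgz'.const_smul S
  have hlap := hmax.laplacian_nonpos (hwz'.sub hSgz')
  rw [hwz'.laplacian_sub hSgz', laplacian_smul S hgz', smul_eq_mul] at hlap
  have hw_subz := hw_sub z hzU hwz_pos
  have hg_superz := mul_lt_mul_of_pos_left (hg_super z hzU) hS
  rw [hwz] at hw_subz
  linarith

end Laplacian

theorem ContDiffAt.lap_eq_laplacian {m : ℕ} {u : EuclideanSpace ℝ (Fin m) → ℝ}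
    {x : EuclideanSpace ℝ (Fin m)} (hu : ContDiffAt ℝ 2 u x) : lap u x = Δ u x := by
  have hdiff : DifferentiableAt ℝ (fderiv ℝ u) x :=
    (hu.fderiv_right (m := 1) le_rfl).differentiableAt one_ne_zero
  simp [lap, laplacian_eq_iteratedFDeriv_orthonormalBasis u (EuclideanSpace.basisFun (Fin m) ℝ),
    iteratedFDeriv_two_apply, fderiv_clm_apply hdiff (differentiableAt_const _)]

theorem laplacian_prod_apply_coord {ι : Type*} [Fintype ι] {f : ι → ℝ → ℝ}
    (hf : ∀ i, ContDiff ℝ 2 (f i)) {k : ι → ℝ} (hk : ∀ i s, deriv (deriv (f i)) s = k i * f i s)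
    (x : EuclideanSpace ℝ ι) :
    Δ (fun y : EuclideanSpace ℝ ι => ∏ i, f i (y i)) x = (∑ i, k i) * ∏ i, f i (x i) := by
  classical
  have hC : ContDiffAt ℝ 2 (fun y : EuclideanSpace ℝ ι => ∏ i, f i (y i)) x :=
    (contDiff_prod fun i _ => (hf i).comp (contDiff_piLp_apply _)).contDiffAt
  rw [hC.laplacian_eq_sum_deriv_deriv (EuclideanSpace.basisFun ι ℝ), Finset.sum_mul]
  refine Finset.sum_congr rfl fun i _ => ?_
  have hslice : (fun t : ℝ => ∏ j, f j ((x + t • EuclideanSpace.basisFun ι ℝ i) j)) =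
      fun t => f i (x i + t) * ∏ j ∈ Finset.univ.erase i, f j (x j) := by
    funext t
    rw [← Finset.mul_prod_erase _ _ (Finset.mem_univ i)]
    congr 1
    · simp
    · exact Finset.prod_congr rfl fun j hj => by simp [Finset.ne_of_mem_erase hj]
  have hshift : ∀ g : ℝ → ℝ, deriv (fun t => g (x i + t)) = fun t => deriv g (x i + t) :=
    fun g => funext fun t => deriv_comp_const_add g _ t
  simp only [hslice, deriv_mul_const_field', hshift, add_zero, hk]
  rw [← Finset.mul_prod_erase _ _ (Finset.mem_univ i)]
  ring

section Strip

variable {n : ℕ}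

def strip (n : ℕ) (δ : ℝ) : Set (EuclideanSpace ℝ (Fin (n + 1))) :=
  {x | 0 < x (Fin.last n) ∧ x (Fin.last n) < δ}

theorem isOpen_strip (δ : ℝ) : IsOpen (strip n δ) :=
  isOpen_Ioo.preimage (f := fun x : EuclideanSpace ℝ (Fin (n + 1)) => x (Fin.last n)) (by fun_prop)

theorem closure_strip_subset (δ : ℝ) :
    closure (strip n δ) ⊆ {x | x (Fin.last n) ∈ Icc 0 δ} :=
  closure_minimal (fun _ hx => ⟨hx.1.le, hx.2.le⟩)
    (isClosed_Icc.preimage (f := fun x : EuclideanSpace ℝ (Fin (n + 1)) => x (Fin.last n))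
      (by fun_prop))

noncomputable def stripBarrierFactor (α β δ : ℝ) : Fin (n + 1) → ℝ → ℝ :=
  Fin.lastCases (fun t => cos (α * (t - δ / 2))) fun _ t => cosh (β * t)

noncomputable def stripBarrier (n : ℕ) (α β δ : ℝ) : EuclideanSpace ℝ (Fin (n + 1)) → ℝ :=
  fun x => ∏ i, stripBarrierFactor α β δ i (x i)

theorem stripBarrier_eq (α β δ : ℝ) (x : EuclideanSpace ℝ (Fin (n + 1))) :
    stripBarrier n α β δ x =
      (∏ m : Fin n, cosh (β * x m.castSucc)) * cos (α * (x (Fin.last n) - δ / 2)) := by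
  simp [stripBarrier, stripBarrierFactor, Fin.prod_univ_castSucc]

theorem contDiff_stripBarrierFactor (α β δ : ℝ) (i : Fin (n + 1)) :
    ContDiff ℝ 2 (stripBarrierFactor α β δ i) := by
  induction i using Fin.lastCases <;>
    simp only [stripBarrierFactor, Fin.lastCases_last, Fin.lastCases_castSucc] <;> fun_prop

theorem contDiff_stripBarrier (α β δ : ℝ) : ContDiff ℝ 2 (stripBarrier n α β δ) :=
  contDiff_prod fun i _ => (contDiff_stripBarrierFactor α β δ i).comp (contDiff_piLp_apply _)

theorem laplacian_stripBarrier (α β δ : ℝ) (x : EuclideanSpace ℝ (Fin (n + 1))) :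
    Δ (stripBarrier n α β δ) x = (n * β ^ 2 - α ^ 2) * stripBarrier n α β δ x := by
  have hk : ∀ (i : Fin (n + 1)) s, deriv (deriv (stripBarrierFactor α β δ i)) s =
      Fin.lastCases (-α ^ 2) (fun _ => β ^ 2) i * stripBarrierFactor α β δ i s := by
    intro i s
    induction i using Fin.lastCases <;>
      simp only [stripBarrierFactor, Fin.lastCases_last, Fin.lastCases_castSucc,
        deriv_deriv_cos_mul_sub, deriv_deriv_cosh_mul]
  unfold stripBarrier
  rw [laplacian_prod_apply_coord (contDiff_stripBarrierFactor α β δ) hk]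
  congr 1
  simp [Fin.sum_univ_castSucc]
  ring

theorem stripBarrier_pos {α β δ : ℝ} (hα : 0 ≤ α) (hαδ : α * δ < π)
    {x : EuclideanSpace ℝ (Fin (n + 1))} (hx : x ∈ closure (strip n δ)) :
    0 < stripBarrier n α β δ x := by
  have hxδ := closure_strip_subset δ hx
  have hcos := cos_mul_half_pos hα (hxδ.1.trans hxδ.2) hαδ
  rw [stripBarrier_eq]
  exact mul_pos (Finset.prod_pos fun m _ => cosh_pos _)
    (hcos.trans_le (cos_mul_half_le_cos_mul_sub hα (by linarith [pi_pos]) hxδ))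

theorem one_add_le_prod_cosh (β : ℝ) (x : EuclideanSpace ℝ (Fin (n + 1))) :
    1 + β ^ 2 / 4 * (‖x‖ ^ 2 - x (Fin.last n) ^ 2) ≤ ∏ m : Fin n, cosh (β * x m.castSucc) := by
  have hnorm : ‖x‖ ^ 2 - x (Fin.last n) ^ 2 = ∑ m : Fin n, x m.castSucc ^ 2 := by
    rw [EuclideanSpace.real_norm_sq_eq, Fin.sum_univ_castSucc, add_sub_cancel_right]
  calc 1 + β ^ 2 / 4 * (‖x‖ ^ 2 - x (Fin.last n) ^ 2)
      ≤ 1 + ∑ m : Fin n, (cosh (β * x m.castSucc) - 1) := by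
        rw [hnorm, Finset.mul_sum, add_le_add_iff_left]
        refine Finset.sum_le_sum fun m _ => ?_
        linarith [one_add_sq_div_four_le_cosh (β * x m.castSucc), mul_pow β (x m.castSucc) 2]
    _ ≤ ∏ m : Fin n, (1 + (cosh (β * x m.castSucc) - 1)) :=
        Finset.one_add_sum_le_prod_one_add _ fun m _ => by linarith [one_le_cosh (β * x m.castSucc)]
    _ = ∏ m : Fin n, cosh (β * x m.castSucc) := by simp

theorem le_stripBarrier {α β δ : ℝ} (hα : 0 ≤ α) (hαδ : α * δ < π)
    {x : EuclideanSpace ℝ (Fin (n + 1))} (hx : x ∈ closure (strip n δ)) :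
    cos (α * δ / 2) * (1 + β ^ 2 / 4 * (‖x‖ ^ 2 - δ ^ 2)) ≤ stripBarrier n α β δ x := by
  have hxδ := closure_strip_subset δ hx
  have hcos := (cos_mul_half_pos hα (hxδ.1.trans hxδ.2) hαδ).le
  have hcos' := cos_mul_half_le_cos_mul_sub hα (by linarith [pi_pos]) hxδ
  have hlast : x (Fin.last n) ^ 2 ≤ δ ^ 2 := pow_le_pow_left₀ hxδ.1 hxδ.2 2
  have hprod : 1 + β ^ 2 / 4 * (‖x‖ ^ 2 - δ ^ 2) ≤ ∏ m : Fin n, cosh (β * x m.castSucc) :=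
    le_trans (by nlinarith [sq_nonneg β]) (one_add_le_prod_cosh β x)
  have hprod_nonneg : 0 ≤ ∏ m : Fin n, cosh (β * x m.castSucc) :=
    Finset.prod_nonneg fun m _ => (cosh_pos _).le
  rw [stripBarrier_eq]
  calc cos (α * δ / 2) * (1 + β ^ 2 / 4 * (‖x‖ ^ 2 - δ ^ 2))
      ≤ cos (α * δ / 2) * ∏ m : Fin n, cosh (β * x m.castSucc) :=
        mul_le_mul_of_nonneg_left hprod hcos
    _ ≤ _ := by rw [mul_comm]; exact mul_le_mul_of_nonneg_left hcos' hprod_nonneg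

theorem tendsto_stripBarrier {α β δ : ℝ} (hα : 0 ≤ α) (hδ : 0 ≤ δ) (hαδ : α * δ < π)
    (hβ : β ≠ 0) :
    Tendsto (stripBarrier n α β δ) (cocompact _ ⊓ 𝓟 (closure (strip n δ))) atTop := by
  have hnorm : Tendsto (fun x : EuclideanSpace ℝ (Fin (n + 1)) => ‖x‖ ^ 2 - δ ^ 2)
      (cocompact _) atTop :=
    tendsto_atTop_add_const_right _ _
      ((tendsto_pow_atTop two_ne_zero).comp tendsto_norm_cocompact_atTop)
  have hbound := (tendsto_atTop_add_const_left _ 1 (hnorm.const_mul_atTop (by positivity :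
    0 < β ^ 2 / 4))).const_mul_atTop (cos_mul_half_pos hα hδ hαδ)
  refine tendsto_atTop_mono' _ ?_ (hbound.mono_left inf_le_left)
  filter_upwards [mem_inf_of_right (mem_principal_self _)] with x hx
  exact le_stripBarrier hα hαδ hx

theorem exists_strip_barrier {δ C : ℝ} (hδ : 0 < δ) (hnarrow : δ ^ 2 * C < π ^ 2 / 4) :
    ∃ g : EuclideanSpace ℝ (Fin (n + 1)) → ℝ, ContDiff ℝ 2 g ∧
      (∀ x ∈ closure (strip n δ), 0 < g x ∧ C * g x < -Δ g x) ∧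
      Tendsto g (cocompact _ ⊓ 𝓟 (closure (strip n δ))) atTop := by
  set α := π / (2 * δ) with hα_def
  set β := √((α ^ 2 - C) / (n + 1))
  have hα : 0 < α := by positivity
  have hαδ : α * δ < π := by
    have : α * δ = π / 2 := by rw [hα_def]; field_simp
    linarith [pi_pos]
  have hC : 0 < α ^ 2 - C := by
    have : α ^ 2 = π ^ 2 / 4 / δ ^ 2 := by rw [hα_def]; field_simp; ring
    rw [this, sub_pos, lt_div_iff₀ (by positivity)]
    linarith
  have hβ₀ : β ≠ 0 := (sqrt_pos.2 (by positivity)).ne'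
  have hgap : 0 < α ^ 2 - n * β ^ 2 - C := by
    have : α ^ 2 - n * β ^ 2 - C = (α ^ 2 - C) / (n + 1) := by
      rw [sq_sqrt (by positivity)]
      field_simp
      ring
    rw [this]
    positivity
  refine ⟨stripBarrier n α β δ, contDiff_stripBarrier α β δ, fun x hx => ?_,
    tendsto_stripBarrier hα.le hδ.le hαδ hβ₀⟩
  have hg := stripBarrier_pos hα.le hαδ hx (β := β)
  rw [laplacian_stripBarrier]
  exact ⟨hg, by nlinarith [mul_pos hgap hg]⟩

end Strip

/-- quantitative maximum principle in the narrow strip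
`Σ = ℝ^{n-1} × (0, δ)` for `-Δw = c(x) w` with `‖c‖_∞ ≤ C₀` and `δ² C₀ < π²/4`. -/
theorem stmt13 {n : ℕ} (δ C0 : ℝ) (hδ : 0 < δ)
    (c w : EuclideanSpace ℝ (Fin (n + 1)) → ℝ)
    (hw2 : ContDiffOn ℝ 2 w {x | 0 < x (Fin.last n) ∧ x (Fin.last n) < δ})
    (hwc : ContinuousOn w (closure {x : EuclideanSpace ℝ (Fin (n + 1)) |
      0 < x (Fin.last n) ∧ x (Fin.last n) < δ}))
    (heq : ∀ x : EuclideanSpace ℝ (Fin (n + 1)), 0 < x (Fin.last n) → x (Fin.last n) < δ →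
      -lap w x = c x * w x)
    (hc : ∀ x, |c x| ≤ C0)
    (hbd : ∃ M : ℝ, ∀ x, |w x| ≤ M)
    (hbdry : ∀ x ∈ frontier {x : EuclideanSpace ℝ (Fin (n + 1)) |
      0 < x (Fin.last n) ∧ x (Fin.last n) < δ}, w x ≤ 0)
    (hnarrow : δ ^ 2 * C0 < π ^ 2 / 4) :
    ∀ x : EuclideanSpace ℝ (Fin (n + 1)), 0 < x (Fin.last n) → x (Fin.last n) < δ →
      w x ≤ 0 := by
  intro x hx₁ hx₂
  obtain ⟨M, hM⟩ := hbd
  obtain ⟨g, hg, hg_strip, hg_top⟩ := exists_strip_barrier (n := n) hδ hnarrow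
  have hw_sub : ∀ y ∈ strip n δ, 0 < w y → -Δ w y ≤ C0 * w y := fun y hy hwy => by
    rw [← (hw2.contDiffAt ((isOpen_strip δ).mem_nhds hy)).lap_eq_laplacian, heq y hy.1 hy.2]
    exact mul_le_mul_of_nonneg_right ((le_abs_self _).trans (hc y)) hwy.le
  exact nonpos_of_neg_laplacian_le_of_barrier (isOpen_strip δ) hw2 hwc
    (fun y _ => (le_abs_self _).trans (hM y)) hbdry hw_sub hg.contDiffOn hg.continuous.continuousOn
    (fun y hy => (hg_strip y hy).1) hg_top (fun y hy => (hg_strip y (subset_closure hy)).2)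
    x ⟨hx₁, hx₂⟩
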